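/- Define, for each integer p ≥ 1, F₀(p) = Σ_{i=0}^∞ [ 1/((2i+1)² + (2p−1)²)³ − 1/((2i+1)² + (2p)²)³ ] and F₁(p) = Σ_{i=0}^∞ [ 1/((2i)² + (2p)²)³ − 1/((2i)² + (2p+1)²)³ ]. Then F₀(p) > 0 and F₁(p) > 0 for every p ≥ 1, the series Σ_{p=1}^∞ (F₀(p) + F₁(p)) converges, and its value lies strictly between 0.134 and 0.135. -/
import Mathlib


/-- `F₀(p) = Σ_{i≥0} [1/((2i+1)² + (2p−1)²)³ − 1/((2i+1)² + (2p)²)³]`. -/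
noncomputable def F₀ (p : ℕ) : ℝ :=
  ∑' i : ℕ, (1 / ((2 * (i : ℝ) + 1) ^ 2 + (2 * (p : ℝ) - 1) ^ 2) ^ 3
    - 1 / ((2 * (i : ℝ) + 1) ^ 2 + (2 * (p : ℝ)) ^ 2) ^ 3)

/-- `F₁(p) = Σ_{i≥0} [1/((2i)² + (2p)²)³ − 1/((2i)² + (2p+1)²)³]`. -/
noncomputable def F₁ (p : ℕ) : ℝ :=
  ∑' i : ℕ, (1 / ((2 * (i : ℝ)) ^ 2 + (2 * (p : ℝ)) ^ 2) ^ 3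
    - 1 / ((2 * (i : ℝ)) ^ 2 + (2 * (p : ℝ) + 1) ^ 2) ^ 3)

lemma summable_base6 : Summable (fun i : ℕ => 1 / ((i:ℝ)+1)^6) := by
  have h : Summable (fun n : ℕ => 1 / (n:ℝ)^6) := by
    rw [Real.summable_one_div_nat_pow]; norm_num
  exact ((summable_nat_add_iff 1).2 h).congr (fun n => by push_cast; ring)

lemma summable_base2 : Summable (fun i : ℕ => 1 / ((i:ℝ)+1)^2) := by
  have h : Summable (fun n : ℕ => 1 / (n:ℝ)^2) := by
    rw [Real.summable_one_div_nat_pow]; norm_num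
  exact ((summable_nat_add_iff 1).2 h).congr (fun n => by push_cast; ring)

lemma summable_cube {d : ℕ → ℝ} (hd : ∀ i : ℕ, ((i:ℝ)+1)^2 ≤ d i) :
    Summable (fun i : ℕ => 1 / (d i)^3) := by
  refine Summable.of_nonneg_of_le (fun i => ?_) (fun i => ?_) summable_base6
  · have h : (0:ℝ) < d i := lt_of_lt_of_le (by positivity) (hd i)
    positivity
  · have h : (0:ℝ) < d i := lt_of_lt_of_le (by positivity) (hd i)
    have h2 : ((i:ℝ)+1)^6 ≤ (d i)^3 := by
      calc ((i:ℝ)+1)^6 = (((i:ℝ)+1)^2)^3 := by ring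
        _ ≤ (d i)^3 := pow_le_pow_left₀ (by positivity) (hd i) 3
    exact one_div_le_one_div_of_le (by positivity) h2

lemma key_diff {A B : ℝ} (hA : 0 < A) (hAB : A ≤ B) :
    1/A^3 - 1/B^3 ≤ 3*(B-A)/(A^3*B) := by
  have hB : 0 < B := hA.trans_le hAB
  rw [div_sub_div _ _ (by positivity) (by positivity),
    div_le_div_iff₀ (by positivity) (by positivity)]
  nlinarith [mul_nonneg (mul_nonneg (mul_nonneg (pow_pos hA 3).le hB.le)
      (sq_nonneg (B-A))) (by linarith : (0:ℝ) ≤ 2*B+A)]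


lemma tsum_sq_le : ∑' i : ℕ, 1 / ((i:ℝ)+1)^2 ≤ 2 := by
  apply Real.tsum_le_of_sum_range_le (fun n => by positivity)
  intro n
  have key : (∑ i ∈ Finset.range n, (2/((i:ℝ)+1) - 2/(((i+1 : ℕ):ℝ)+1)))
      = 2/(((0:ℕ):ℝ)+1) - 2/((n:ℝ)+1) :=
    Finset.sum_range_sub' (fun j : ℕ => 2/((j:ℝ)+1)) n
  have hle : ∑ i ∈ Finset.range n, 1 / ((i:ℝ)+1)^2
      ≤ ∑ i ∈ Finset.range n, (2/((i:ℝ)+1) - 2/(((i+1 : ℕ):ℝ)+1)) := by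
    refine Finset.sum_le_sum (fun i _ => ?_)
    push_cast
    rw [div_sub_div _ _ (by positivity) (by positivity),
      div_le_div_iff₀ (by positivity) (by positivity)]
    nlinarith [Nat.cast_nonneg (α := ℝ) i]
  rw [key] at hle
  have hn : (0:ℝ) ≤ 2/((n:ℝ)+1) := by positivity
  have h0 : 2/(((0:ℕ):ℝ)+1) = 2 := by norm_num
  linarith

lemma tail6 : ∑' i : ℕ, 1 / ((i:ℝ)+5)^6 ≤ 1/5120 := by
  apply Real.tsum_le_of_sum_range_le (fun n => by positivity)
  intro n
  have key : (∑ i ∈ Finset.range n, (1/(5*((i:ℝ)+4)^5) - 1/(5*(((i+1 : ℕ):ℝ)+4)^5)))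
      = 1/(5*(((0:ℕ):ℝ)+4)^5) - 1/(5*((n:ℝ)+4)^5) :=
    Finset.sum_range_sub' (fun j : ℕ => 1/(5*((j:ℝ)+4)^5)) n
  have hle : ∑ i ∈ Finset.range n, 1 / ((i:ℝ)+5)^6
      ≤ ∑ i ∈ Finset.range n, (1/(5*((i:ℝ)+4)^5) - 1/(5*(((i+1 : ℕ):ℝ)+4)^5)) := by
    refine Finset.sum_le_sum (fun i _ => ?_)
    push_cast
    have ha : (0:ℝ) ≤ (i:ℝ) := Nat.cast_nonneg i
    rw [div_sub_div _ _ (by positivity) (by positivity),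
      div_le_div_iff₀ (by positivity) (by positivity)]
    nlinarith [pow_nonneg ha 2, pow_nonneg ha 3, pow_nonneg ha 4, pow_nonneg ha 5,
      pow_nonneg ha 6, pow_nonneg ha 7, pow_nonneg ha 8, pow_nonneg ha 9,
      pow_nonneg ha 10, pow_nonneg ha 11]
  rw [key] at hle
  have hn : (0:ℝ) ≤ 1/(5*((n:ℝ)+4)^5) := by positivity
  have h0 : 1/(5*(((0:ℕ):ℝ)+4)^5) = 1/5120 := by norm_num
  linarith

lemma tail5 : ∑' p : ℕ, 1 / ((p:ℝ)+13)^5 ≤ 1/82944 := by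
  apply Real.tsum_le_of_sum_range_le (fun n => by positivity)
  intro n
  have key : (∑ i ∈ Finset.range n, (1/(4*((i:ℝ)+12)^4) - 1/(4*(((i+1 : ℕ):ℝ)+12)^4)))
      = 1/(4*(((0:ℕ):ℝ)+12)^4) - 1/(4*((n:ℝ)+12)^4) :=
    Finset.sum_range_sub' (fun j : ℕ => 1/(4*((j:ℝ)+12)^4)) n
  have hle : ∑ i ∈ Finset.range n, 1 / ((i:ℝ)+13)^5
      ≤ ∑ i ∈ Finset.range n, (1/(4*((i:ℝ)+12)^4) - 1/(4*(((i+1 : ℕ):ℝ)+12)^4)) := by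
    refine Finset.sum_le_sum (fun i _ => ?_)
    push_cast
    have ha : (0:ℝ) ≤ (i:ℝ) := Nat.cast_nonneg i
    rw [div_sub_div _ _ (by positivity) (by positivity),
      div_le_div_iff₀ (by positivity) (by positivity)]
    nlinarith [pow_nonneg ha 2, pow_nonneg ha 3, pow_nonneg ha 4, pow_nonneg ha 5,
      pow_nonneg ha 6, pow_nonneg ha 7, pow_nonneg ha 8, pow_nonneg ha 9]
  rw [key] at hle
  have hn : (0:ℝ) ≤ 1/(4*((n:ℝ)+12)^4) := by positivity
  have h0 : 1/(4*(((0:ℕ):ℝ)+12)^4) = 1/82944 := by norm_num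
  linarith

noncomputable def g₀ (p i : ℕ) : ℝ :=
  1 / ((2 * (i : ℝ) + 1) ^ 2 + (2 * (p : ℝ) - 1) ^ 2) ^ 3
    - 1 / ((2 * (i : ℝ) + 1) ^ 2 + (2 * (p : ℝ)) ^ 2) ^ 3

noncomputable def g₁ (p i : ℕ) : ℝ :=
  1 / ((2 * (i : ℝ)) ^ 2 + (2 * (p : ℝ)) ^ 2) ^ 3
    - 1 / ((2 * (i : ℝ)) ^ 2 + (2 * (p : ℝ) + 1) ^ 2) ^ 3

lemma hd₀a (p i : ℕ) : ((i:ℝ)+1)^2 ≤ (2*(i:ℝ)+1)^2 + (2*(p:ℝ)-1)^2 := by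
  nlinarith [Nat.cast_nonneg (α := ℝ) i, sq_nonneg (2*(p:ℝ)-1)]

lemma hd₀b (p i : ℕ) : ((i:ℝ)+1)^2 ≤ (2*(i:ℝ)+1)^2 + (2*(p:ℝ))^2 := by
  nlinarith [Nat.cast_nonneg (α := ℝ) i, sq_nonneg (2*(p:ℝ))]

lemma hd₁a (p i : ℕ) (hp : (1:ℝ) ≤ (p:ℝ)) :
    ((i:ℝ)+1)^2 ≤ (2*(i:ℝ))^2 + (2*(p:ℝ))^2 := by
  nlinarith [sq_nonneg ((i:ℝ)-1), Nat.cast_nonneg (α := ℝ) i]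

lemma hd₁b (p i : ℕ) (hp : (1:ℝ) ≤ (p:ℝ)) :
    ((i:ℝ)+1)^2 ≤ (2*(i:ℝ))^2 + (2*(p:ℝ)+1)^2 := by
  nlinarith [sq_nonneg ((i:ℝ)-1), Nat.cast_nonneg (α := ℝ) i]

lemma summable₀ (p : ℕ) : Summable (fun i : ℕ => g₀ p i) := by
  unfold g₀
  exact (summable_cube (fun i => hd₀a p i)).sub (summable_cube (fun i => hd₀b p i))

lemma summable₁ (p : ℕ) (hp : 1 ≤ p) : Summable (fun i : ℕ => g₁ p i) := by
  have hp1 : (1:ℝ) ≤ (p:ℝ) := by exact_mod_cast hp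
  unfold g₁
  exact (summable_cube (fun i => hd₁a p i hp1)).sub (summable_cube (fun i => hd₁b p i hp1))

lemma pos₀ (p i : ℕ) (hp : 1 ≤ p) : 0 < g₀ p i := by
  have hp1 : (1:ℝ) ≤ (p:ℝ) := by exact_mod_cast hp
  unfold g₀
  have hA : (0:ℝ) < (2*(i:ℝ)+1)^2 + (2*(p:ℝ)-1)^2 :=
    lt_of_lt_of_le (by positivity) (hd₀a p i)
  have hAB : (2*(i:ℝ)+1)^2 + (2*(p:ℝ)-1)^2 < (2*(i:ℝ)+1)^2 + (2*(p:ℝ))^2 := by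
    nlinarith
  have h3 : ((2*(i:ℝ)+1)^2 + (2*(p:ℝ)-1)^2)^3 < ((2*(i:ℝ)+1)^2 + (2*(p:ℝ))^2)^3 :=
    pow_lt_pow_left₀ hAB hA.le (by norm_num)
  have := one_div_lt_one_div_of_lt (by positivity) h3
  linarith

lemma pos₁ (p i : ℕ) (hp : 1 ≤ p) : 0 < g₁ p i := by
  have hp1 : (1:ℝ) ≤ (p:ℝ) := by exact_mod_cast hp
  unfold g₁
  have hA : (0:ℝ) < (2*(i:ℝ))^2 + (2*(p:ℝ))^2 :=
    lt_of_lt_of_le (by positivity) (hd₁a p i hp1)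
  have hAB : (2*(i:ℝ))^2 + (2*(p:ℝ))^2 < (2*(i:ℝ))^2 + (2*(p:ℝ)+1)^2 := by
    nlinarith
  have h3 : ((2*(i:ℝ))^2 + (2*(p:ℝ))^2)^3 < ((2*(i:ℝ))^2 + (2*(p:ℝ)+1)^2)^3 :=
    pow_lt_pow_left₀ hAB hA.le (by norm_num)
  have := one_div_lt_one_div_of_lt (by positivity) h3
  linarith

lemma bound₀ (p i : ℕ) (hp : 1 ≤ p) :
    g₀ p i ≤ 3/(p:ℝ)^5 * (1/((i:ℝ)+1)^2) := by
  have hp1 : (1:ℝ) ≤ (p:ℝ) := by exact_mod_cast hp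
  have hi : (0:ℝ) ≤ (i:ℝ) := Nat.cast_nonneg i
  unfold g₀
  set A := (2*(i:ℝ)+1)^2 + (2*(p:ℝ)-1)^2 with hAdef
  set B := (2*(i:ℝ)+1)^2 + (2*(p:ℝ))^2 with hBdef
  have hA : 0 < A := lt_of_lt_of_le (by positivity) (hd₀a p i)
  have hAB : A ≤ B := by rw [hAdef, hBdef]; nlinarith
  have hB : 0 < B := hA.trans_le hAB
  have h1 : 1/A^3 - 1/B^3 ≤ 3*(B-A)/(A^3*B) := key_diff hA hAB
  have hA1 : ((i:ℝ)+1)^2 ≤ A := hd₀a p i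
  have hA2 : (p:ℝ)^2 ≤ A := by rw [hAdef]; nlinarith [sq_nonneg (2*(i:ℝ)+1)]
  have hB2 : 4*(p:ℝ)^2 ≤ B := by rw [hBdef]; nlinarith [sq_nonneg (2*(i:ℝ)+1)]
  have hBA : B - A = 4*(p:ℝ) - 1 := by rw [hAdef, hBdef]; ring
  have hprod : 4*(((i:ℝ)+1)^2*(p:ℝ)^6) ≤ A^3*B := by
    have e1 : (p:ℝ)^2*(p:ℝ)^2 ≤ A*A := mul_le_mul hA2 hA2 (by positivity) hA.le
    have e2 : ((i:ℝ)+1)^2*((p:ℝ)^2*(p:ℝ)^2) ≤ A*(A*A) :=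
      mul_le_mul hA1 e1 (by positivity) hA.le
    have e3 : (((i:ℝ)+1)^2*((p:ℝ)^2*(p:ℝ)^2))*(4*(p:ℝ)^2) ≤ (A*(A*A))*B :=
      mul_le_mul e2 hB2 (by positivity) (by nlinarith)
    nlinarith [e3]
  have h2 : 3*(B-A)/(A^3*B) ≤ (12*(p:ℝ))/(4*(((i:ℝ)+1)^2*(p:ℝ)^6)) := by
    apply div_le_div₀ (by positivity) (by rw [hBA]; linarith) (by positivity) hprod
  have h3 : (12*(p:ℝ))/(4*(((i:ℝ)+1)^2*(p:ℝ)^6)) = 3/(p:ℝ)^5 * (1/((i:ℝ)+1)^2) := by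
    have hp0 : (p:ℝ) ≠ 0 := by positivity
    have hi0 : ((i:ℝ)+1) ≠ 0 := by positivity
    field_simp
    ring
  rw [h3] at h2
  linarith

lemma bound₁ (p i : ℕ) (hp : 1 ≤ p) :
    g₁ p i ≤ 3/(p:ℝ)^5 * (1/((i:ℝ)+1)^2) := by
  have hp1 : (1:ℝ) ≤ (p:ℝ) := by exact_mod_cast hp
  have hi : (0:ℝ) ≤ (i:ℝ) := Nat.cast_nonneg i
  unfold g₁
  set A := (2*(i:ℝ))^2 + (2*(p:ℝ))^2 with hAdef
  set B := (2*(i:ℝ))^2 + (2*(p:ℝ)+1)^2 with hBdef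
  have hA : 0 < A := lt_of_lt_of_le (by positivity) (hd₁a p i hp1)
  have hAB : A ≤ B := by rw [hAdef, hBdef]; nlinarith
  have hB : 0 < B := hA.trans_le hAB
  have h1 : 1/A^3 - 1/B^3 ≤ 3*(B-A)/(A^3*B) := key_diff hA hAB
  have hA1 : ((i:ℝ)+1)^2 ≤ A := hd₁a p i hp1
  have hA2 : 4*(p:ℝ)^2 ≤ A := by rw [hAdef]; nlinarith [sq_nonneg (2*(i:ℝ))]
  have hB2 : 4*(p:ℝ)^2 ≤ B := by rw [hBdef]; nlinarith [sq_nonneg (2*(i:ℝ))]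
  have hBA : B - A = 4*(p:ℝ) + 1 := by rw [hAdef, hBdef]; ring
  have hprod : 64*(((i:ℝ)+1)^2*(p:ℝ)^6) ≤ A^3*B := by
    have e1 : (4*(p:ℝ)^2)*(4*(p:ℝ)^2) ≤ A*A := mul_le_mul hA2 hA2 (by positivity) hA.le
    have e2 : ((i:ℝ)+1)^2*((4*(p:ℝ)^2)*(4*(p:ℝ)^2)) ≤ A*(A*A) :=
      mul_le_mul hA1 e1 (by positivity) hA.le
    have e3 : (((i:ℝ)+1)^2*((4*(p:ℝ)^2)*(4*(p:ℝ)^2)))*(4*(p:ℝ)^2) ≤ (A*(A*A))*B :=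
      mul_le_mul e2 hB2 (by positivity) (by nlinarith)
    nlinarith [e3]
  have h2 : 3*(B-A)/(A^3*B) ≤ (15*(p:ℝ))/(64*(((i:ℝ)+1)^2*(p:ℝ)^6)) := by
    apply div_le_div₀ (by positivity) (by rw [hBA]; linarith) (by positivity) hprod
  have h3 : (15*(p:ℝ))/(64*(((i:ℝ)+1)^2*(p:ℝ)^6)) ≤ 3/(p:ℝ)^5 * (1/((i:ℝ)+1)^2) := by
    have hp0 : (0:ℝ) < (p:ℝ) := by linarith
    rw [div_le_iff₀ (by positivity)]
    have expand : 3/(p:ℝ)^5 * (1/((i:ℝ)+1)^2) * (64*(((i:ℝ)+1)^2*(p:ℝ)^6))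
        = 192 * (p:ℝ) := by
      field_simp
      ring
    rw [expand]
    linarith
  linarith

lemma F₀_eq (p : ℕ) : F₀ p = ∑' i : ℕ, g₀ p i := rfl
lemma F₁_eq (p : ℕ) : F₁ p = ∑' i : ℕ, g₁ p i := rfl

lemma summable_maj (p : ℕ) : Summable (fun i : ℕ => 3/(p:ℝ)^5 * (1/((i:ℝ)+1)^2)) :=
  summable_base2.mul_left _

lemma F₀_le (p : ℕ) (hp : 1 ≤ p) : F₀ p ≤ 6/(p:ℝ)^5 := by
  have hp0 : (0:ℝ) < (p:ℝ) := by exact_mod_cast hp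
  rw [F₀_eq]
  calc ∑' i : ℕ, g₀ p i ≤ ∑' i : ℕ, (3/(p:ℝ)^5 * (1/((i:ℝ)+1)^2)) :=
      Summable.tsum_le_tsum (fun i => bound₀ p i hp) (summable₀ p) (summable_maj p)
    _ = 3/(p:ℝ)^5 * ∑' i : ℕ, 1/((i:ℝ)+1)^2 := tsum_mul_left
    _ ≤ 3/(p:ℝ)^5 * 2 := by
        have := tsum_sq_le
        have h35 : (0:ℝ) ≤ 3/(p:ℝ)^5 := by positivity
        nlinarith
    _ = 6/(p:ℝ)^5 := by ring

lemma F₁_le (p : ℕ) (hp : 1 ≤ p) : F₁ p ≤ 6/(p:ℝ)^5 := by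
  have hp0 : (0:ℝ) < (p:ℝ) := by exact_mod_cast hp
  rw [F₁_eq]
  calc ∑' i : ℕ, g₁ p i ≤ ∑' i : ℕ, (3/(p:ℝ)^5 * (1/((i:ℝ)+1)^2)) :=
      Summable.tsum_le_tsum (fun i => bound₁ p i hp) (summable₁ p hp) (summable_maj p)
    _ = 3/(p:ℝ)^5 * ∑' i : ℕ, 1/((i:ℝ)+1)^2 := tsum_mul_left
    _ ≤ 3/(p:ℝ)^5 * 2 := by
        have := tsum_sq_le
        have h35 : (0:ℝ) ≤ 3/(p:ℝ)^5 := by positivity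
        nlinarith
    _ = 6/(p:ℝ)^5 := by ring

lemma summable_shift6 : Summable (fun i : ℕ => 1/((i:ℝ)+5)^6) := by
  refine Summable.of_nonneg_of_le (fun i => by positivity) (fun i => ?_) summable_base6
  refine one_div_le_one_div_of_le (by positivity) ?_
  have h : ((i:ℝ)+1) ≤ ((i:ℝ)+5) := by linarith
  exact pow_le_pow_left₀ (by positivity) h 6

lemma tail₀_le (p : ℕ) : ∑' i : ℕ, g₀ p (i+5) ≤ 1/327680 := by
  have h1 : ∀ i : ℕ, g₀ p (i+5) ≤ (1:ℝ)/64 * (1/((i:ℝ)+5)^6) := by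
    intro i
    unfold g₀
    push_cast
    have hA : (0:ℝ) < (2*((i:ℝ)+5)+1)^2 + (2*(p:ℝ)-1)^2 := by
      have := sq_nonneg (2*(p:ℝ)-1)
      nlinarith [Nat.cast_nonneg (α := ℝ) i]
    have hstep : 1/((2*((i:ℝ)+5)+1)^2 + (2*(p:ℝ)-1)^2)^3
        - 1/((2*((i:ℝ)+5)+1)^2 + (2*(p:ℝ))^2)^3
        ≤ 1/((2*((i:ℝ)+5)+1)^2 + (2*(p:ℝ)-1)^2)^3 := by
      have : (0:ℝ) ≤ 1/((2*((i:ℝ)+5)+1)^2 + (2*(p:ℝ))^2)^3 := by positivity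
      linarith
    refine hstep.trans ?_
    have hden : 64*((i:ℝ)+5)^6 ≤ ((2*((i:ℝ)+5)+1)^2 + (2*(p:ℝ)-1)^2)^3 := by
      calc 64*((i:ℝ)+5)^6 = (4*((i:ℝ)+5)^2)^3 := by ring
        _ ≤ ((2*((i:ℝ)+5)+1)^2 + (2*(p:ℝ)-1)^2)^3 := by
            refine pow_le_pow_left₀ (by positivity) ?_ 3
            nlinarith [Nat.cast_nonneg (α := ℝ) i, sq_nonneg (2*(p:ℝ)-1)]
    calc 1/((2*((i:ℝ)+5)+1)^2 + (2*(p:ℝ)-1)^2)^3 ≤ 1/(64*((i:ℝ)+5)^6) :=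
        one_div_le_one_div_of_le (by positivity) hden
      _ = (1:ℝ)/64 * (1/((i:ℝ)+5)^6) := by
          have h5 : ((i:ℝ)+5) ≠ 0 := by positivity
          field_simp
  have hsl : Summable (fun i : ℕ => g₀ p (i+5)) := (summable_nat_add_iff 5).2 (summable₀ p)
  have hsr : Summable (fun i : ℕ => (1:ℝ)/64 * (1/((i:ℝ)+5)^6)) := summable_shift6.mul_left _
  calc ∑' i : ℕ, g₀ p (i+5) ≤ ∑' i : ℕ, ((1:ℝ)/64 * (1/((i:ℝ)+5)^6)) :=
      Summable.tsum_le_tsum h1 hsl hsr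
    _ = (1:ℝ)/64 * ∑' i : ℕ, 1/((i:ℝ)+5)^6 := tsum_mul_left
    _ ≤ (1:ℝ)/64 * (1/5120) := by nlinarith [tail6]
    _ = 1/327680 := by norm_num

lemma tail₁_le (p : ℕ) : ∑' i : ℕ, g₁ p (i+5) ≤ 1/327680 := by
  have h1 : ∀ i : ℕ, g₁ p (i+5) ≤ (1:ℝ)/64 * (1/((i:ℝ)+5)^6) := by
    intro i
    unfold g₁
    push_cast
    have hstep : 1/((2*((i:ℝ)+5))^2 + (2*(p:ℝ))^2)^3
        - 1/((2*((i:ℝ)+5))^2 + (2*(p:ℝ)+1)^2)^3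
        ≤ 1/((2*((i:ℝ)+5))^2 + (2*(p:ℝ))^2)^3 := by
      have : (0:ℝ) ≤ 1/((2*((i:ℝ)+5))^2 + (2*(p:ℝ)+1)^2)^3 := by positivity
      linarith
    refine hstep.trans ?_
    have hden : 64*((i:ℝ)+5)^6 ≤ ((2*((i:ℝ)+5))^2 + (2*(p:ℝ))^2)^3 := by
      calc 64*((i:ℝ)+5)^6 = (4*((i:ℝ)+5)^2)^3 := by ring
        _ ≤ ((2*((i:ℝ)+5))^2 + (2*(p:ℝ))^2)^3 := by
            refine pow_le_pow_left₀ (by positivity) ?_ 3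
            nlinarith [sq_nonneg (2*(p:ℝ))]
    calc 1/((2*((i:ℝ)+5))^2 + (2*(p:ℝ))^2)^3 ≤ 1/(64*((i:ℝ)+5)^6) :=
        one_div_le_one_div_of_le (by positivity) hden
      _ = (1:ℝ)/64 * (1/((i:ℝ)+5)^6) := by
          have h5 : ((i:ℝ)+5) ≠ 0 := by positivity
          field_simp
  have hsl : Summable (fun i : ℕ => g₁ p (i+5)) := by
    have h0 : ∀ i : ℕ, 0 ≤ g₁ p (i+5) := by
      intro i
      unfold g₁
      push_cast
      have hAB : ((2*((i:ℝ)+5))^2 + (2*(p:ℝ))^2) ≤ ((2*((i:ℝ)+5))^2 + (2*(p:ℝ)+1)^2) := by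
        nlinarith [Nat.cast_nonneg (α := ℝ) p]
      have hA : (0:ℝ) < (2*((i:ℝ)+5))^2 + (2*(p:ℝ))^2 := by
        nlinarith [Nat.cast_nonneg (α := ℝ) i, sq_nonneg (2*(p:ℝ))]
      have := one_div_le_one_div_of_le (by positivity : (0:ℝ) < ((2*((i:ℝ)+5))^2 + (2*(p:ℝ))^2)^3)
        (pow_le_pow_left₀ hA.le hAB 3)
      linarith
    exact Summable.of_nonneg_of_le h0 h1 (summable_shift6.mul_left _)
  have hsr : Summable (fun i : ℕ => (1:ℝ)/64 * (1/((i:ℝ)+5)^6)) := summable_shift6.mul_left _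
  calc ∑' i : ℕ, g₁ p (i+5) ≤ ∑' i : ℕ, ((1:ℝ)/64 * (1/((i:ℝ)+5)^6)) :=
      Summable.tsum_le_tsum h1 hsl hsr
    _ = (1:ℝ)/64 * ∑' i : ℕ, 1/((i:ℝ)+5)^6 := tsum_mul_left
    _ ≤ (1:ℝ)/64 * (1/5120) := by nlinarith [tail6]
    _ = 1/327680 := by norm_num

lemma F₀_pos (p : ℕ) (hp : 1 ≤ p) : 0 < F₀ p := by
  rw [F₀_eq]
  exact Summable.tsum_pos (summable₀ p) (fun i => (pos₀ p i hp).le) 0 (pos₀ p 0 hp)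

lemma F₁_pos (p : ℕ) (hp : 1 ≤ p) : 0 < F₁ p := by
  rw [F₁_eq]
  exact Summable.tsum_pos (summable₁ p hp) (fun i => (pos₁ p i hp).le) 0 (pos₁ p 0 hp)

lemma Fsum_le (p : ℕ) (hp : 1 ≤ p) : F₀ p + F₁ p ≤ 12/(p:ℝ)^5 := by
  have := F₀_le p hp
  have := F₁_le p hp
  have : 6/(p:ℝ)^5 + 6/(p:ℝ)^5 = 12/(p:ℝ)^5 := by ring
  linarith

lemma Fsummable : Summable (fun p : ℕ => F₀ (p + 1) + F₁ (p + 1)) := by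
  refine Summable.of_nonneg_of_le (fun p => ?_) (fun p => ?_) (summable_base2.mul_left 12)
  · have h0 := F₀_pos (p+1) (Nat.le_add_left 1 p)
    have h1 := F₁_pos (p+1) (Nat.le_add_left 1 p)
    linarith
  · have h := Fsum_le (p+1) (Nat.le_add_left 1 p)
    push_cast at h
    have hx : (1:ℝ) ≤ (p:ℝ)+1 := by linarith [Nat.cast_nonneg (α := ℝ) p]
    have h2 : ((p:ℝ)+1)^2 ≤ ((p:ℝ)+1)^5 := pow_le_pow_right₀ hx (by norm_num)
    have h3 : 12/((p:ℝ)+1)^5 ≤ 12 * (1/((p:ℝ)+1)^2) := by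
      rw [mul_one_div]
      exact div_le_div₀ (by norm_num) le_rfl (by positivity) h2
    linarith

lemma Fq_up (q : ℕ) (hq : 1 ≤ q) :
    F₀ q + F₁ q ≤ (∑ i ∈ Finset.range 5, g₀ q i) + (∑ i ∈ Finset.range 5, g₁ q i)
      + 1/163840 := by
  have h0 : F₀ q = (∑ i ∈ Finset.range 5, g₀ q i) + ∑' i : ℕ, g₀ q (i+5) := by
    rw [F₀_eq, ← Summable.sum_add_tsum_nat_add 5 (summable₀ q)]
  have h1 : F₁ q = (∑ i ∈ Finset.range 5, g₁ q i) + ∑' i : ℕ, g₁ q (i+5) := by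
    rw [F₁_eq, ← Summable.sum_add_tsum_nat_add 5 (summable₁ q hq)]
  have t0 := tail₀_le q
  have t1 := tail₁_le q
  rw [h0, h1]
  have : (1:ℝ)/327680 + 1/327680 = 1/163840 := by norm_num
  linarith

lemma Fq_lo (q : ℕ) (hq : 1 ≤ q) :
    (∑ i ∈ Finset.range 5, g₀ q i) + (∑ i ∈ Finset.range 5, g₁ q i) ≤ F₀ q + F₁ q := by
  have h0 : F₀ q = (∑ i ∈ Finset.range 5, g₀ q i) + ∑' i : ℕ, g₀ q (i+5) := by
    rw [F₀_eq, ← Summable.sum_add_tsum_nat_add 5 (summable₀ q)]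
  have h1 : F₁ q = (∑ i ∈ Finset.range 5, g₁ q i) + ∑' i : ℕ, g₁ q (i+5) := by
    rw [F₁_eq, ← Summable.sum_add_tsum_nat_add 5 (summable₁ q hq)]
  have t0 : 0 ≤ ∑' i : ℕ, g₀ q (i+5) := tsum_nonneg (fun i => (pos₀ q (i+5) hq).le)
  have t1 : 0 ≤ ∑' i : ℕ, g₁ q (i+5) := tsum_nonneg (fun i => (pos₁ q (i+5) hq).le)
  rw [h0, h1]
  linarith

lemma summable_shift5 : Summable (fun p : ℕ => 1/((p:ℝ)+13)^5) := by
  refine Summable.of_nonneg_of_le (fun p => by positivity) (fun p => ?_) summable_base2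
  refine one_div_le_one_div_of_le (by positivity) ?_
  calc ((p:ℝ)+1)^2 ≤ ((p:ℝ)+13)^2 := pow_le_pow_left₀ (by positivity) (by linarith) 2
    _ ≤ ((p:ℝ)+13)^5 := pow_le_pow_right₀ (by linarith [Nat.cast_nonneg (α := ℝ) p]) (by norm_num)

lemma ptail_le : ∑' p : ℕ, (F₀ (p + 13) + F₁ (p + 13)) ≤ 1/6912 := by
  have hsl : Summable (fun p : ℕ => F₀ (p + 13) + F₁ (p + 13)) := by
    refine ((summable_nat_add_iff 12).2 Fsummable).congr (fun p => ?_)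
    rw [show p + 12 + 1 = p + 13 from by omega]
  have hsr : Summable (fun p : ℕ => (12:ℝ) * (1/((p:ℝ)+13)^5)) := summable_shift5.mul_left _
  have hb : ∀ p : ℕ, F₀ (p + 13) + F₁ (p + 13) ≤ (12:ℝ) * (1/((p:ℝ)+13)^5) := by
    intro p
    have h := Fsum_le (p+13) (by omega)
    push_cast at h
    rw [mul_one_div]
    linarith
  calc ∑' p : ℕ, (F₀ (p + 13) + F₁ (p + 13)) ≤ ∑' p : ℕ, ((12:ℝ) * (1/((p:ℝ)+13)^5)) :=
      Summable.tsum_le_tsum hb hsl hsr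
    _ = 12 * ∑' p : ℕ, 1/((p:ℝ)+13)^5 := tsum_mul_left
    _ ≤ 12 * (1/82944) := by nlinarith [tail5]
    _ = 1/6912 := by norm_num

theorem corner_detuning_sums :
    (∀ p : ℕ, 1 ≤ p →
      Summable (fun i : ℕ => 1 / ((2 * (i : ℝ) + 1) ^ 2 + (2 * (p : ℝ) - 1) ^ 2) ^ 3
        - 1 / ((2 * (i : ℝ) + 1) ^ 2 + (2 * (p : ℝ)) ^ 2) ^ 3) ∧
      Summable (fun i : ℕ => 1 / ((2 * (i : ℝ)) ^ 2 + (2 * (p : ℝ)) ^ 2) ^ 3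
        - 1 / ((2 * (i : ℝ)) ^ 2 + (2 * (p : ℝ) + 1) ^ 2) ^ 3) ∧
      0 < F₀ p ∧ 0 < F₁ p) ∧
    Summable (fun p : ℕ => F₀ (p + 1) + F₁ (p + 1)) ∧
    0.134 < ∑' p : ℕ, (F₀ (p + 1) + F₁ (p + 1)) ∧
    (∑' p : ℕ, (F₀ (p + 1) + F₁ (p + 1))) < 0.135 := by
  refine ⟨fun p hp => ⟨summable₀ p, summable₁ p hp, F₀_pos p hp, F₁_pos p hp⟩,
    Fsummable, ?_, ?_⟩
  · -- lower bound
    have h1 : ∑ p ∈ Finset.range 12,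
        ((∑ i ∈ Finset.range 5, g₀ (p+1) i) + (∑ i ∈ Finset.range 5, g₁ (p+1) i))
        ≤ ∑ p ∈ Finset.range 12, (F₀ (p + 1) + F₁ (p + 1)) :=
      Finset.sum_le_sum (fun p _ => Fq_lo (p+1) (Nat.le_add_left 1 p))
    have h2 : ∑ p ∈ Finset.range 12, (F₀ (p + 1) + F₁ (p + 1))
        ≤ ∑' p : ℕ, (F₀ (p + 1) + F₁ (p + 1)) := by
      refine Summable.sum_le_tsum (Finset.range 12) (fun p _ => ?_) Fsummable
      have h0 := F₀_pos (p+1) (Nat.le_add_left 1 p)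
      have h1 := F₁_pos (p+1) (Nat.le_add_left 1 p)
      linarith
    have h3 : (0.134:ℝ) < ∑ p ∈ Finset.range 12,
        ((∑ i ∈ Finset.range 5, g₀ (p+1) i) + (∑ i ∈ Finset.range 5, g₁ (p+1) i)) := by
      simp only [g₀, g₁, Finset.sum_range_succ, Finset.sum_range_zero]
      norm_num
    linarith
  · -- upper bound
    have hsplit : ∑' p : ℕ, (F₀ (p + 1) + F₁ (p + 1))
        = (∑ p ∈ Finset.range 12, (F₀ (p + 1) + F₁ (p + 1)))
          + ∑' p : ℕ, (F₀ (p + 13) + F₁ (p + 13)) := by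
      rw [← Summable.sum_add_tsum_nat_add 12 Fsummable]
    have h1 : ∑ p ∈ Finset.range 12, (F₀ (p + 1) + F₁ (p + 1))
        ≤ ∑ p ∈ Finset.range 12,
          ((∑ i ∈ Finset.range 5, g₀ (p+1) i) + (∑ i ∈ Finset.range 5, g₁ (p+1) i)
            + 1/163840) :=
      Finset.sum_le_sum (fun p _ => Fq_up (p+1) (Nat.le_add_left 1 p))
    have h2 : ∑ p ∈ Finset.range 12,
        ((∑ i ∈ Finset.range 5, g₀ (p+1) i) + (∑ i ∈ Finset.range 5, g₁ (p+1) i)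
          + 1/163840) + 1/6912 < (0.135:ℝ) := by
      simp only [g₀, g₁, Finset.sum_range_succ, Finset.sum_range_zero]
      norm_num
    have h3 := ptail_le
    rw [hsplit]
    linarith
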